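/- Lemma 6 (value form): the minimum of cost(π') over feasible allocations π' of P' with Z(π') = Z'_max equals the minimum of cost(π) over feasible allocations π of P with Z(π) = Z_max whose sorted vector equals φ_f; i.e., the optimal cost of the dummy-augmented minimum-cost maximum-flow problem P' equals the optimal cost of the original problem P restricted to max-lexmin fair maximum allocations. -/

import Mathlib

/-- A feasible allocation: every assigned triple was bid on, every job is
assigned at most once, and capacities are respected. -/
def Feasible {J T K : Type*} [DecidableEq J] [DecidableEq T] [DecidableEq K]
    (b : J → T → K → Prop) (n : K → T → ℕ) (π : Finset (J × T × K)) : Prop :=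
  (∀ x ∈ π, b x.1 x.2.1 x.2.2) ∧
  (∀ j : J, (π.filter (fun x => x.1 = j)).card ≤ 1) ∧
  (∀ (k : K) (t : T), (π.filter (fun x => x.2.1 = t ∧ x.2.2 = k)).card ≤ n k t)

/-- Number of jobs a company `k` receives in allocation `π`. -/
def alloc {J T K : Type*} [DecidableEq K]
    (π : Finset (J × T × K)) (k : K) : ℕ :=
  (π.filter (fun x => x.2.2 = k)).card

/-- Total compensation of an allocation. -/
def cost {J T K : Type*} (c : J → T → K → ℕ) (π : Finset (J × T × K)) : ℕ :=
  ∑ x ∈ π, c x.1 x.2.1 x.2.2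

/-- The maximum number of allocatable jobs. -/
noncomputable def Zmax {J T K : Type*} [DecidableEq J] [DecidableEq T] [DecidableEq K]
    (b : J → T → K → Prop) (n : K → T → ℕ) : ℕ :=
  sSup {z | ∃ π : Finset (J × T × K), Feasible b n π ∧ π.card = z}

/-- The allocation vector of `π` sorted in nondecreasing order. -/
def sortedVec {J T K : Type*} [Fintype K] [DecidableEq K]
    (π : Finset (J × T × K)) : List ℕ :=
  Multiset.sort (Finset.univ.val.map (fun k => alloc π k)) (· ≤ ·)

/-- `π` is a max-lexmin fair maximum allocation. -/
noncomputable def MaxLexminFair {J T K : Type*} [Fintype K]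
    [DecidableEq J] [DecidableEq T] [DecidableEq K]
    (b : J → T → K → Prop) (n : K → T → ℕ) (π : Finset (J × T × K)) : Prop :=
  Feasible b n π ∧ π.card = Zmax b n ∧
    ∀ π' : Finset (J × T × K), Feasible b n π' → π'.card = Zmax b n →
      sortedVec π' = sortedVec π ∨ List.Lex (· < ·) (sortedVec π') (sortedVec π)


/-! ## The dummy-augmented instance `P'` of Section 3.2.

Given the max-lexmin fair sorted vector `φf = (φ_1 ≤ … ≤ φ_|K|)` of `P`,
we add `L = φ_|K| - φ_1` dummy layers; layer `l` (`0`-indexed) carries one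
dummy time and `#{i : φ_i < φ_1 + l + 1}` dummy jobs of cost `0` that every
company bids on with capacity `1` per dummy time.  In `P'` each company may
receive at most `φ_|K|` jobs in total. -/

/-- Number `L` of dummy layers: largest minus smallest entry of `φf`. -/
def Ldim (φf : List ℕ) : ℕ := φf.getLast! - φf.head!

/-- Number of dummy jobs in (0-indexed) layer `l`: the number of entries of
`φf` smaller than `φ_1 + (l + 1)`. -/
def layerSize (φf : List ℕ) (l : ℕ) : ℕ :=
  (φf.filter (fun x => x < φf.head! + l + 1)).length

/-- The finite type of dummy jobs: layer `l` carries `layerSize φf l` jobs. -/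
abbrev Dummy (φf : List ℕ) : Type := (l : Fin (Ldim φf)) × Fin (layerSize φf l)

/-- Bids of `P'`: the original bids on real jobs at real times, plus a bid of
every company on every dummy job of layer `l` at the dummy time of layer `l`. -/
def bidAug {J T K : Type*} (b : J → T → K → Prop) (φf : List ℕ) :
    (J ⊕ Dummy φf) → (T ⊕ Fin (Ldim φf)) → K → Prop
  | Sum.inl j, Sum.inl t, k => b j t k
  | Sum.inr d, Sum.inr l, _ => d.1 = l
  | _, _, _ => False

/-- Costs of `P'`: original costs on real triples, `0` on dummy triples. -/
def costAug {J T K : Type*} (c : J → T → K → ℕ) (φf : List ℕ) :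
    (J ⊕ Dummy φf) → (T ⊕ Fin (Ldim φf)) → K → ℕ
  | Sum.inl j, Sum.inl t, k => c j t k
  | _, _, _ => 0

/-- Capacities of `P'`: original capacities at real times, capacity `1` for
every company at every dummy time. -/
def capAug {T K : Type*} (n : K → T → ℕ) (φf : List ℕ) :
    K → (T ⊕ Fin (Ldim φf)) → ℕ :=
  fun k t => match t with
  | Sum.inl t => n k t
  | Sum.inr _ => 1

/-- Feasibility for `P'`: feasibility for the augmented bids and capacities,
together with the requirement that each company receives at most `φ_|K|`
(the largest entry of `φf`) jobs in total. -/
def FeasibleAug {J T K : Type*} [DecidableEq J] [DecidableEq T] [DecidableEq K]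
    (b : J → T → K → Prop) (n : K → T → ℕ) (φf : List ℕ)
    (π' : Finset ((J ⊕ Dummy φf) × (T ⊕ Fin (Ldim φf)) × K)) : Prop :=
  Feasible (bidAug b φf) (capAug n φf) π' ∧ ∀ k : K, alloc π' k ≤ φf.getLast!

/-- The maximum number of allocatable jobs in `P'`. -/
noncomputable def ZmaxAug {J T K : Type*} [DecidableEq J] [DecidableEq T] [DecidableEq K]
    (b : J → T → K → Prop) (n : K → T → ℕ) (φf : List ℕ) : ℕ :=
  sSup {z | ∃ π' : Finset ((J ⊕ Dummy φf) × (T ⊕ Fin (Ldim φf)) × K),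
    FeasibleAug b n φf π' ∧ π'.card = z}

/-- Real restriction of an allocation of `P'`: the triples whose job lies in
`J` (feasibility forces their time to lie in `T`), viewed in `J × T × K`. -/
def restrict {J T K D T' : Type*} [DecidableEq J] [DecidableEq T] [DecidableEq K]
    (π' : Finset ((J ⊕ D) × (T ⊕ T') × K)) : Finset (J × T × K) :=
  π'.filterMap
    (fun x => match x with
      | (Sum.inl j, Sum.inl t, k) => some (j, t, k)
      | _ => none)
    (by rintro ⟨j₁ | d₁, t₁ | l₁, k₁⟩ ⟨j₂ | d₂, t₂ | l₂, k₂⟩ x h₁ h₂ <;>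
          simp_all <;> subst h₁ <;> simp_all)

/-- The embedding of real triples into the triples of `P'`. -/
def embTriple {J T K D T' : Type*} (x : J × T × K) : (J ⊕ D) × (T ⊕ T') × K :=
  (Sum.inl x.1, Sum.inl x.2.1, x.2.2)



/-!
Layer `l` of `P'` holds one dummy job for each company whose entry of `φ_f` is at most
`φ_1 + l`, so the dummy jobs are exactly what tops every company of an allocation with sorted
vector `φ_f` up to `φ_|K|` jobs, at no cost. Hence `Z'_max = |K| φ_|K|`, and every allocation of
`P` with sorted vector `φ_f` extends to a maximum allocation of `P'` of the same cost.

Conversely, restrict a maximum allocation of `P'` to the real jobs, and let `a_k` be the real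
load of company `k`. There are only `Σ_i (φ_|K| - φ_i) = |K| φ_|K| - Z_max` dummy jobs, so the
restriction is a maximum allocation of `P` and every layer is used completely. A company gets at
most one dummy job per layer, so filling the `t - φ_1` bottom layers gives
`Σ_k (t - a_k) ≤ Σ_i (t - φ_i)` for each level `t` in `φ_f`. A sorted vector lexicographically
below `φ_f` violates this at `t = φ_i`, where `i` is the first position at which the two differ,
so max-lexmin fairness forces the restriction to have sorted vector `φ_f`.
-/

open Finset hiding restrict

theorem List.Pairwise.rel_getLast! {α : Type*} [Inhabited α] {R : α → α → Prop} [Std.Refl R]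
    {l : List α} {a : α} (h : l.Pairwise R) (ha : a ∈ l) : R a l.getLast! := by
  rw [List.getLast!_of_getLast? (List.getLast?_eq_some_getLast (List.ne_nil_of_mem ha))]
  exact h.rel_getLast ha

theorem List.Lex.exists_sum_map_tsub_lt {ψ φ : List ℕ} (h : List.Lex (· < ·) ψ φ)
    (hlen : ψ.length = φ.length) (hφ : φ.Pairwise (· ≤ ·)) :
    ∃ t ∈ φ, (φ.map (t - ·)).sum < (ψ.map (t - ·)).sum := by
  induction h with
  | nil => simp at hlen
  | @cons a ψ φ _ ih =>
    obtain ⟨t, ht, hlt⟩ := ih (by simpa using hlen) (List.pairwise_cons.1 hφ).2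
    exact ⟨t, List.mem_cons_of_mem a ht, by simpa using hlt⟩
  | @rel x ψ y φ hxy =>
    refine ⟨y, List.mem_cons_self, ?_⟩
    have hzero : (φ.map (y - ·)).sum = 0 :=
      List.sum_eq_zero fun z hz => by
        obtain ⟨w, hw, rfl⟩ := List.mem_map.1 hz
        exact Nat.sub_eq_zero_of_le ((List.pairwise_cons.1 hφ).1 w hw)
    simp only [List.map_cons, List.sum_cons, hzero]
    omega

theorem card_filter_range_lt_add (p u x : ℕ) (hx : p ≤ x) :
    ((range u).filter (fun i => x < p + i + 1)).card = p + u - x := by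
  rw [show (range u).filter (fun i => x < p + i + 1) = Ico (x - p) u by ext; simp; omega,
    Nat.card_Ico]
  omega

theorem sum_range_length_filter_lt (p u : ℕ) :
    ∀ l : List ℕ, (∀ x ∈ l, p ≤ x) →
      ∑ i ∈ range u, (l.filter (fun x => x < p + i + 1)).length = (l.map (p + u - ·)).sum
  | [], _ => by simp
  | x :: l, hl => by
    simp only [List.filter_cons, List.map_cons, List.sum_cons]
    rw [← sum_range_length_filter_lt p u l fun y hy => hl y (List.mem_cons_of_mem x hy),
      ← card_filter_range_lt_add p u x (hl x List.mem_cons_self), card_filter,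
      ← sum_add_distrib]
    refine sum_congr rfl fun i _ => ?_
    by_cases h : x < p + i + 1 <;> simp [h, add_comm]

theorem sum_univ_fin_ite_lt_add (p x L : ℕ) (hx : p ≤ x) :
    ∑ l : Fin L, (if x < p + l + 1 then 1 else 0) = p + L - x := by
  rw [Fin.sum_univ_eq_sum_range (fun l => if x < p + l + 1 then 1 else 0), ← card_filter,
    card_filter_range_lt_add p L x hx]

theorem sum_filter_val_lt_eq_sum_range {M : Type*} [AddCommMonoid M] {L u : ℕ} (hu : u ≤ L)
    (g : ℕ → M) : ∑ l : Fin L with l.val < u, g l = ∑ l ∈ range u, g l := by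
  rw [sum_filter, Fin.sum_univ_eq_sum_range (fun l => if l < u then g l else 0), ← sum_filter]
  congr 1
  ext l
  simp only [mem_filter, mem_range]
  omega

theorem sum_tsub_le_sum_filter_val_lt {K : Type*} [Fintype K] {L M u t : ℕ} (hu : u ≤ L)
    (ht : t + (L - u) ≤ M) (a : K → ℕ) (c : K → Fin L → ℕ) (hc : ∀ k l, c k l ≤ 1)
    (ha : ∀ k, a k + ∑ l, c k l = M) :
    ∑ k, (t - a k) ≤ ∑ l : Fin L with l.val < u, ∑ k, c k l := by
  rw [sum_comm]
  refine sum_le_sum fun k _ => ?_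
  have hlow : #(univ.filter (fun l : Fin L => l.val < u)) = u := by
    rw [card_eq_sum_ones, sum_filter_val_lt_eq_sum_range hu (fun _ => 1), sum_const, card_range,
      smul_eq_mul, mul_one]
  have htop : ∑ l : Fin L with ¬ l.val < u, c k l ≤ L - u := by
    refine (sum_le_sum fun l _ => hc k l).trans ?_
    have := card_filter_add_card_filter_not (s := univ) (fun l : Fin L => l.val < u)
    simp only [card_univ, Fintype.card_fin] at this
    simp only [sum_const, smul_eq_mul, mul_one]
    omega
  have := sum_filter_add_sum_filter_not univ (fun l : Fin L => l.val < u) (c k)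
  have := ha k
  omega

theorem injOn_fst_iff_card_filter_le_one {α β : Type*} [DecidableEq α] {s : Finset (α × β)} :
    Set.InjOn Prod.fst (s : Set (α × β)) ↔ ∀ a, (s.filter (·.1 = a)).card ≤ 1 := by
  simp only [card_le_one, mem_filter]
  exact ⟨fun h a x hx y hy => h hx.1 hy.1 (hx.2.trans hy.2.symm),
    fun h x hx y hy hxy => h x.1 x ⟨hx, rfl⟩ y ⟨hy, hxy.symm⟩⟩

theorem card_filter_eq_layerSize {K : Type*} [Fintype K] {φf : List ℕ} {f : K → ℕ}
    (hf : univ.val.map f = (φf : Multiset ℕ)) (l : ℕ) :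
    (univ.filter (fun k => f k < φf.head! + l + 1)).card = layerSize φf l := by
  rw [layerSize, ← List.countP_eq_length_filter, ← Multiset.coe_countP, ← hf,
    Multiset.countP_map]
  rfl

theorem exists_layer_assignment {K : Type*} [Fintype K] {φf : List ℕ} {f : K → ℕ}
    (hf : univ.val.map f = (φf : Multiset ℕ)) :
    ∃ e : Dummy φf → K, (∀ d, f (e d) < φf.head! + d.1 + 1) ∧
      Function.Injective (fun d => (d.1, e d)) := by
  classical
  let F (l : Fin (Ldim φf)) : Finset K := univ.filter (fun k => f k < φf.head! + l + 1)
  let E (l : Fin (Ldim φf)) : F l ≃ Fin (layerSize φf l) :=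
    equivFinOfCardEq (card_filter_eq_layerSize hf l)
  refine ⟨fun d => (E d.1).symm d.2, fun d => (mem_filter.1 ((E d.1).symm d.2).2).2, ?_⟩
  rintro ⟨l, i⟩ ⟨l', i'⟩ h
  obtain ⟨rfl, h⟩ := Prod.mk.inj h
  exact congrArg _ ((E l).symm.injective (Subtype.ext h))

theorem sum_layerSize_lt {φf : List ℕ} (hφ : φf.Pairwise (· ≤ ·)) {u : ℕ} (hu : u ≤ Ldim φf) :
    ∑ l : Fin (Ldim φf) with l.val < u, layerSize φf l = (φf.map (φf.head! + u - ·)).sum := by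
  rw [sum_filter_val_lt_eq_sum_range hu]
  exact sum_range_length_filter_lt _ _ φf fun x hx => hφ.head!_le hx

section Allocation

variable {J T K D T' : Type*}

theorem embTriple_injective :
    Function.Injective (embTriple : J × T × K → (J ⊕ D) × (T ⊕ T') × K) := by
  rintro ⟨j, t, k⟩ ⟨j', t', k'⟩ h
  simp_all [embTriple]

def embTripleEmb : J × T × K ↪ (J ⊕ D) × (T ⊕ T') × K := ⟨embTriple, embTriple_injective⟩

theorem isLeft_of_bidAug {b : J → T → K → Prop} {φf : List ℕ} :
    ∀ x : (J ⊕ Dummy φf) × (T ⊕ Fin (Ldim φf)) × K,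
      bidAug b φf x.1 x.2.1 x.2.2 → x.2.1.isLeft → x.1.isLeft := by
  rintro ⟨j | d, t | l, k⟩ <;> simp [bidAug]

section SortedVec

variable [Fintype K] [DecidableEq K]

theorem card_eq_sum_alloc (π : Finset (J × T × K)) : π.card = ∑ k, alloc π k :=
  card_eq_sum_card_fiberwise fun x _ => mem_univ x.2.2

theorem coe_sortedVec (π : Finset (J × T × K)) :
    (sortedVec π : Multiset ℕ) = univ.val.map (alloc π) :=
  Multiset.sort_eq _ _

theorem pairwise_sortedVec (π : Finset (J × T × K)) : (sortedVec π).Pairwise (· ≤ ·) :=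
  Multiset.pairwise_sort _ _

theorem length_sortedVec (π : Finset (J × T × K)) : (sortedVec π).length = Fintype.card K := by
  rw [← Multiset.coe_card, coe_sortedVec, Multiset.card_map]
  rfl

theorem sum_map_sortedVec {M : Type*} [AddCommMonoid M] (π : Finset (J × T × K)) (g : ℕ → M) :
    ((sortedVec π).map g).sum = ∑ k, g (alloc π k) := by
  rw [← Multiset.sum_coe, ← Multiset.map_coe, coe_sortedVec, Multiset.map_map]
  rfl

theorem alloc_mem_sortedVec (π : Finset (J × T × K)) (k : K) : alloc π k ∈ sortedVec π := by
  rw [← Multiset.mem_coe, coe_sortedVec]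
  exact Multiset.mem_map_of_mem _ (mem_univ k)

theorem head!_sortedVec_le_alloc (π : Finset (J × T × K)) (k : K) :
    (sortedVec π).head! ≤ alloc π k :=
  (pairwise_sortedVec π).head!_le (alloc_mem_sortedVec π k)

theorem alloc_le_getLast!_sortedVec (π : Finset (J × T × K)) (k : K) :
    alloc π k ≤ (sortedVec π).getLast! :=
  (pairwise_sortedVec π).rel_getLast! (alloc_mem_sortedVec π k)

theorem sum_layerSize_add_card {φf : List ℕ} {π : Finset (J × T × K)} (hφ : sortedVec π = φf) :
    ∑ l : Fin (Ldim φf), layerSize φf l + π.card = Fintype.card K * φf.getLast! := by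
  subst hφ
  have hall := sum_layerSize_lt (pairwise_sortedVec π) le_rfl
  rw [filter_true_of_mem fun l _ => l.2, sum_map_sortedVec] at hall
  rw [hall, card_eq_sum_alloc, ← sum_add_distrib, ← smul_eq_mul, ← card_univ, ← sum_const]
  refine sum_congr rfl fun k _ => ?_
  have := head!_sortedVec_le_alloc π k
  have := alloc_le_getLast!_sortedVec π k
  have hL : Ldim (sortedVec π) = (sortedVec π).getLast! - (sortedVec π).head! := rfl
  omega

end SortedVec

variable [DecidableEq J] [DecidableEq T] [DecidableEq K]
  {b : J → T → K → Prop} {n : K → T → ℕ} {φf : List ℕ}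

theorem Feasible.injOn_fst {π : Finset (J × T × K)} (h : Feasible b n π) :
    Set.InjOn Prod.fst (π : Set (J × T × K)) :=
  injOn_fst_iff_card_filter_le_one.2 h.2.1

theorem Feasible.card_le_zmax [Fintype J] {π : Finset (J × T × K)} (h : Feasible b n π) :
    π.card ≤ Zmax b n :=
  le_csSup ⟨Fintype.card J, by
      rintro _ ⟨ρ, hρ, rfl⟩
      exact card_le_card_of_injOn Prod.fst (fun _ _ => mem_coe.2 (mem_univ _)) hρ.injOn_fst⟩
    ⟨π, h, rfl⟩

theorem mem_restrict {π' : Finset ((J ⊕ D) × (T ⊕ T') × K)} {y : J × T × K} :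
    y ∈ restrict π' ↔ embTriple y ∈ π' := by
  obtain ⟨j, t, k⟩ := y
  refine ⟨fun h => ?_, fun h => (mem_filterMap _).2 ⟨_, h, rfl⟩⟩
  obtain ⟨⟨j' | d, t' | l, k'⟩, hx, he⟩ := (mem_filterMap _).1 h <;> simp_all [embTriple]

theorem map_restrict (π' : Finset ((J ⊕ D) × (T ⊕ T') × K)) :
    (restrict π').map embTripleEmb = π'.filter (fun x => x.1.isLeft ∧ x.2.1.isLeft) := by
  ext ⟨j | d, t | l, k⟩ <;> simp [embTripleEmb, embTriple, mem_restrict]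

theorem card_filter_restrict_le {π' : Finset ((J ⊕ D) × (T ⊕ T') × K)}
    {p : J × T × K → Prop} [DecidablePred p] {q : (J ⊕ D) × (T ⊕ T') × K → Prop}
    [DecidablePred q] (hpq : ∀ y, p y → q (embTriple y)) :
    ((restrict π').filter p).card ≤ (π'.filter q).card :=
  card_le_card_of_injOn embTriple
    (fun y hy => by
      rw [coe_filter] at hy ⊢
      exact ⟨mem_restrict.1 hy.1, hpq y hy.2⟩)
    embTriple_injective.injOn

theorem alloc_eq_alloc_restrict_add [Fintype T'] [DecidableEq T']
    {π' : Finset ((J ⊕ D) × (T ⊕ T') × K)} (h : ∀ x ∈ π', x.2.1.isLeft → x.1.isLeft) (k : K) :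
    alloc π' k = alloc (restrict π') k +
      ∑ l : T', (π'.filter (fun x => x.2.1 = Sum.inr l ∧ x.2.2 = k)).card := by
  have hreal : alloc (restrict π') k = ((π'.filter (·.2.2 = k)).filter (·.2.1.isLeft)).card := by
    have hmap : ((restrict π').filter (·.2.2 = k)).map (embTripleEmb (D := D) (T' := T')) =
        ((restrict π').map embTripleEmb).filter (·.2.2 = k) := by
      rw [filter_map]; rfl
    rw [alloc, ← card_map embTripleEmb, hmap, map_restrict, filter_filter, filter_filter]
    congr 1
    refine filter_congr fun x hx => ?_
    have := h x hx
    tauto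
  have hdummy : ((π'.filter (·.2.2 = k)).filter (¬ ·.2.1.isLeft)).card =
      ∑ l : T', (π'.filter (fun x => x.2.1 = Sum.inr l ∧ x.2.2 = k)).card := by
    rw [card_eq_sum_card_fiberwise (f := (·.2.1)) (t := univ.map .inr), sum_map]
    · refine sum_congr rfl fun l _ => congrArg card ?_
      ext x
      simp only [mem_filter]
      constructor
      · rintro ⟨⟨⟨hx, hk⟩, -⟩, hl⟩
        exact ⟨hx, hl, hk⟩
      · rintro ⟨hx, hl, hk⟩
        exact ⟨⟨⟨hx, hk⟩, by simp [hl]⟩, hl⟩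
    · rintro ⟨j, t | l, k'⟩ hx <;> simp_all
  rw [hreal, ← hdummy, card_filter_add_card_filter_not]
  rfl

theorem cost_costAug_eq_cost_restrict (c : J → T → K → ℕ)
    (π' : Finset ((J ⊕ Dummy φf) × (T ⊕ Fin (Ldim φf)) × K)) :
    cost (costAug c φf) π' = cost c (restrict π') := by
  rw [cost, cost, ← sum_filter_of_ne (p := fun x => x.1.isLeft ∧ x.2.1.isLeft), ← map_restrict,
    sum_map]
  · rfl
  · rintro ⟨j | d, t | l, k⟩ _ h <;> simp_all [costAug]

theorem feasible_restrict {π' : Finset ((J ⊕ Dummy φf) × (T ⊕ Fin (Ldim φf)) × K)}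
    (h : Feasible (bidAug b φf) (capAug n φf) π') : Feasible b n (restrict π') :=
  ⟨fun _ hy => h.1 _ (mem_restrict.1 hy),
    fun j => (card_filter_restrict_le fun _ hy => congrArg Sum.inl hy).trans (h.2.1 (.inl j)),
    fun k t => (card_filter_restrict_le fun _ hy => ⟨congrArg Sum.inl hy.1, hy.2⟩).trans
      (h.2.2 k (.inl t))⟩

theorem sum_card_filter_layer_le [Fintype K]
    {π' : Finset ((J ⊕ Dummy φf) × (T ⊕ Fin (Ldim φf)) × K)}
    (h : Feasible (bidAug b φf) (capAug n φf) π') (l : Fin (Ldim φf)) :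
    ∑ k, (π'.filter (fun x => x.2.1 = Sum.inr l ∧ x.2.2 = k)).card ≤ layerSize φf l := by
  have hfiber : ∑ k, (π'.filter (fun x => x.2.1 = Sum.inr l ∧ x.2.2 = k)).card =
      (π'.filter (fun x => x.2.1 = Sum.inr l)).card := by
    rw [card_eq_sum_card_fiberwise (f := (·.2.2)) (t := univ) fun _ _ => mem_univ _]
    simp only [filter_filter]
  rw [hfiber]
  refine (card_le_card_of_injOn Prod.fst ?_ (h.injOn_fst.mono (filter_subset _ _))).trans
    ((card_image_le (s := univ) (f := fun i => Sum.inr ⟨l, i⟩)).trans_eq (by simp))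
  rintro ⟨j | ⟨l', i⟩, t, k⟩ hx <;> obtain ⟨hx, rfl : t = _⟩ := mem_filter.1 hx
  · exact (h.1 _ hx).elim
  · obtain rfl : l' = l := h.1 _ hx
    simp

def extendAlloc (π : Finset (J × T × K)) (e : Dummy φf → K) :
    Finset ((J ⊕ Dummy φf) × (T ⊕ Fin (Ldim φf)) × K) :=
  π.map embTripleEmb ∪ univ.image (fun d => (Sum.inr d, Sum.inr d.1, e d))

theorem restrict_extendAlloc (π : Finset (J × T × K)) (e : Dummy φf → K) :
    restrict (extendAlloc π e) = π := by
  ext y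
  simp [mem_restrict, extendAlloc, embTripleEmb, embTriple]

theorem card_extendAlloc (π : Finset (J × T × K)) (e : Dummy φf → K) :
    (extendAlloc π e).card = π.card + Fintype.card (Dummy φf) := by
  rw [extendAlloc, card_union_of_disjoint, card_map, card_image_of_injective, card_univ]
  · intro d d' h
    simpa using congrArg Prod.fst h
  · simp [disjoint_left, embTripleEmb, embTriple]

theorem feasible_extendAlloc {π : Finset (J × T × K)} (hπ : Feasible b n π) {e : Dummy φf → K}
    (he : Function.Injective (fun d => (d.1, e d))) :
    Feasible (bidAug b φf) (capAug n φf) (extendAlloc π e) := by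
  refine ⟨?_, ?_, ?_⟩
  · simp only [extendAlloc, mem_union, mem_map, mem_image, mem_univ, true_and]
    rintro _ (⟨y, hy, rfl⟩ | ⟨d, rfl⟩)
    · exact hπ.1 y hy
    · rfl
  · refine injOn_fst_iff_card_filter_le_one.1 ?_
    simp only [extendAlloc, coe_union, coe_map, coe_image, coe_univ, Set.image_univ]
    rintro _ (⟨x, hx, rfl⟩ | ⟨d, rfl⟩) _ (⟨y, hy, rfl⟩ | ⟨d', rfl⟩) h
    · simp only [embTripleEmb, embTriple, Function.Embedding.coeFn_mk, Sum.inl.injEq] at h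
      rw [hπ.injOn_fst hx hy h]
    · simp [embTripleEmb, embTriple] at h
    · simp [embTripleEmb, embTriple] at h
    · simp only [Sum.inr.injEq] at h
      rw [h]
  · rintro k (t | l)
    · calc _ ≤ ((π.filter (fun x => x.2.1 = t ∧ x.2.2 = k)).map embTripleEmb).card := by
            refine card_le_card fun x hx => ?_
            simp only [extendAlloc, mem_filter, mem_union, mem_map, mem_image] at hx ⊢
            obtain ⟨⟨y, hy, rfl⟩ | ⟨d, -, rfl⟩, ht, hk⟩ := hx
            · obtain ⟨j, t', k'⟩ := y
              simp_all [embTripleEmb, embTriple]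
            · simp at ht
        _ ≤ n k t := (card_map _).trans_le (hπ.2.2 k t)
    · refine card_le_one.2 fun x hx y hy => ?_
      simp only [extendAlloc, mem_filter, mem_union, mem_map, mem_image, mem_univ,
        true_and] at hx hy
      obtain ⟨⟨x, -, rfl⟩ | ⟨d, rfl⟩, hl, hk⟩ := hx
      · simp [embTripleEmb, embTriple] at hl
      obtain ⟨⟨y, -, rfl⟩ | ⟨d', rfl⟩, hl', hk'⟩ := hy
      · simp [embTripleEmb, embTriple] at hl'
      simp only [Sum.inr.injEq] at hl hl'
      have hdd : d = d' := he (Prod.ext (hl.trans hl'.symm) (hk.trans hk'.symm))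
      rw [hdd]

theorem alloc_extendAlloc_le {π : Finset (J × T × K)} (hπ : Feasible b n π) {e : Dummy φf → K}
    (he : Function.Injective (fun d => (d.1, e d)))
    (he_lt : ∀ d, alloc π (e d) < φf.head! + d.1 + 1) (k : K)
    (hk : φf.head! ≤ alloc π k ∧ alloc π k ≤ φf.getLast!) :
    alloc (extendAlloc π e) k ≤ φf.getLast! := by
  have hfeas := feasible_extendAlloc hπ he
  have hlayer : ∀ l : Fin (Ldim φf),
      ((extendAlloc π e).filter (fun x => x.2.1 = Sum.inr l ∧ x.2.2 = k)).card ≤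
        if alloc π k < φf.head! + l + 1 then 1 else 0 := by
    intro l
    split_ifs with hl
    · exact hfeas.2.2 k (Sum.inr l)
    · refine (card_eq_zero.2 (filter_eq_empty_iff.2 ?_)).le
      simp only [extendAlloc, mem_union, mem_map, mem_image, mem_univ, true_and]
      rintro _ (⟨y, -, rfl⟩ | ⟨d, rfl⟩) ⟨hdl, rfl⟩
      · simp [embTripleEmb, embTriple] at hdl
      · simp only [Sum.inr.injEq] at hdl
        exact hl (hdl ▸ he_lt d)
  rw [alloc_eq_alloc_restrict_add (fun x hx => isLeft_of_bidAug x (hfeas.1 x hx)),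
    restrict_extendAlloc]
  have := (sum_le_sum fun l _ => hlayer l).trans_eq
    (sum_univ_fin_ite_lt_add φf.head! (alloc π k) (Ldim φf) hk.1)
  have hL : Ldim φf = φf.getLast! - φf.head! := rfl
  omega

theorem exists_feasibleAug_restrict_eq [Fintype K] {π : Finset (J × T × K)}
    (hπ : Feasible b n π) (hφ : sortedVec π = φf) :
    ∃ π' : Finset ((J ⊕ Dummy φf) × (T ⊕ Fin (Ldim φf)) × K),
      FeasibleAug b n φf π' ∧ π'.card = Fintype.card K * φf.getLast! ∧ restrict π' = π := by
  subst hφ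
  obtain ⟨e, he_lt, he⟩ := exists_layer_assignment (coe_sortedVec π).symm
  refine ⟨extendAlloc π e, ⟨feasible_extendAlloc hπ he, fun k => ?_⟩, ?_,
    restrict_extendAlloc π e⟩
  · exact alloc_extendAlloc_le hπ he he_lt k
      ⟨head!_sortedVec_le_alloc π k, alloc_le_getLast!_sortedVec π k⟩
  · rw [card_extendAlloc, Fintype.card_sigma, ← sum_layerSize_add_card rfl, add_comm]
    simp

theorem zmaxAug_eq [Fintype K] {π' : Finset ((J ⊕ Dummy φf) × (T ⊕ Fin (Ldim φf)) × K)}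
    (hπ' : FeasibleAug b n φf π') (hcard : π'.card = Fintype.card K * φf.getLast!) :
    ZmaxAug b n φf = Fintype.card K * φf.getLast! := by
  refine IsGreatest.csSup_eq ⟨⟨π', hπ', hcard⟩, ?_⟩
  rintro _ ⟨ρ, hρ, rfl⟩
  rw [card_eq_sum_alloc, ← smul_eq_mul, ← card_univ, ← sum_const]
  exact sum_le_sum fun k _ => hρ.2 k

theorem card_restrict_eq_zmax_and_sortedVec_eq [Fintype J] [Fintype K] {π₀ : Finset (J × T × K)}
    (hfair : MaxLexminFair b n π₀) (hφ : sortedVec π₀ = φf)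
    {π' : Finset ((J ⊕ Dummy φf) × (T ⊕ Fin (Ldim φf)) × K)} (hπ' : FeasibleAug b n φf π')
    (hcard : π'.card = Fintype.card K * φf.getLast!) :
    (restrict π').card = Zmax b n ∧ sortedVec (restrict π') = φf := by
  set π := restrict π'
  set c : K → Fin (Ldim φf) → ℕ := fun k l =>
    (π'.filter (fun x => x.2.1 = Sum.inr l ∧ x.2.2 = k)).card
  have hfeas : Feasible b n π := feasible_restrict hπ'.1
  have hM : ∀ k, alloc π k + ∑ l, c k l = φf.getLast! := by
    intro k
    rw [← alloc_eq_alloc_restrict_add (fun x hx => isLeft_of_bidAug x (hπ'.1.1 x hx))]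
    refine (sum_eq_sum_iff_of_le fun k _ => hπ'.2 k).1 ?_ k (mem_univ k)
    rw [← card_eq_sum_alloc, hcard, sum_const, card_univ, smul_eq_mul]
  have hlayer : ∀ l, ∑ k, c k l ≤ layerSize φf l := sum_card_filter_layer_le hπ'.1
  have htotal : π.card + ∑ l, ∑ k, c k l = Fintype.card K * φf.getLast! := by
    rw [card_eq_sum_alloc, sum_comm, ← sum_add_distrib, sum_congr rfl fun k _ => hM k, sum_const,
      card_univ, smul_eq_mul]
  have hsize := sum_layerSize_add_card hφ
  have hZ : π₀.card = Zmax b n := hfair.2.1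
  have hle := sum_le_sum fun l (_ : l ∈ univ) => hlayer l
  have hcardπ : π.card = Zmax b n := by
    have := hfeas.card_le_zmax
    omega
  have hfull : ∀ l, ∑ k, c k l = layerSize φf l := fun l =>
    (sum_eq_sum_iff_of_le fun l _ => hlayer l).1 (by omega) l (mem_univ l)
  have hsorted : φf.Pairwise (· ≤ ·) := hφ ▸ pairwise_sortedVec π₀
  refine ⟨hcardπ, ((hfair.2.2 π hfeas hcardπ).resolve_right fun hlex => ?_).trans hφ⟩
  rw [hφ] at hlex
  obtain ⟨t, ht, hlt⟩ := hlex.exists_sum_map_tsub_lt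
    (by rw [← hφ, length_sortedVec, length_sortedVec]) hsorted
  have hp : φf.head! ≤ t := hsorted.head!_le ht
  have htM : t ≤ φf.getLast! := hsorted.rel_getLast! ht
  have hL : Ldim φf = φf.getLast! - φf.head! := rfl
  have hdeficit := sum_tsub_le_sum_filter_val_lt (u := t - φf.head!) (t := t) (by omega)
    (by omega) (alloc π) c (fun k l => hπ'.1.2.2 k (.inr l)) hM
  rw [sum_congr rfl fun l _ => hfull l, sum_layerSize_lt hsorted (by omega),
    show φf.head! + (t - φf.head!) = t by omega] at hdeficit
  rw [sum_map_sortedVec] at hlt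
  omega

end Allocation

theorem augmented_min_cost_eq_general {J T K : Type*}
    [Fintype J] [Fintype K]
    [DecidableEq J] [DecidableEq T] [DecidableEq K]
    (b : J → T → K → Prop) (c : J → T → K → ℕ) (n : K → T → ℕ)
    (φf : List ℕ) (hφf : ∃ π₀ : Finset (J × T × K),
      MaxLexminFair b n π₀ ∧ sortedVec π₀ = φf) :
    sInf {z | ∃ π' : Finset ((J ⊕ Dummy φf) × (T ⊕ Fin (Ldim φf)) × K),
        FeasibleAug b n φf π' ∧ π'.card = ZmaxAug b n φf ∧
          cost (costAug c φf) π' = z} =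
      sInf {z | ∃ π : Finset (J × T × K),
        Feasible b n π ∧ π.card = Zmax b n ∧ sortedVec π = φf ∧
          cost c π = z} := by
  obtain ⟨π₀, hfair, hφ⟩ := hφf
  obtain ⟨π₀', hπ₀', hcard₀', -⟩ := exists_feasibleAug_restrict_eq hfair.1 hφ
  have hZ := zmaxAug_eq hπ₀' hcard₀'
  congr 1
  ext z
  constructor
  · rintro ⟨π', hπ', hcard, rfl⟩
    obtain ⟨hcardπ, hsorted⟩ :=
      card_restrict_eq_zmax_and_sortedVec_eq hfair hφ hπ' (hcard.trans hZ)
    exact ⟨restrict π', feasible_restrict hπ'.1, hcardπ, hsorted,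
      (cost_costAug_eq_cost_restrict c π').symm⟩
  · rintro ⟨π, hπ, -, hsorted, rfl⟩
    obtain ⟨π', hπ', hcard, rfl⟩ := exists_feasibleAug_restrict_eq hπ hsorted
    exact ⟨π', hπ', hcard.trans hZ.symm, cost_costAug_eq_cost_restrict c π'⟩

/-- Lemma 6, value form: the optimal cost of the dummy-augmented
minimum-cost maximum-flow problem `P'` equals the optimal cost of `P`
restricted to maximum allocations whose sorted vector is the max-lexmin
fairness vector `φf`. -/
theorem augmented_min_cost_eq {J T K : Type*}
    [Fintype J] [Fintype T] [Fintype K] [Nonempty J] [Nonempty T] [Nonempty K]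
    [DecidableEq J] [DecidableEq T] [DecidableEq K]
    (b : J → T → K → Prop) (c : J → T → K → ℕ) (n : K → T → ℕ)
    (φf : List ℕ) (hφf : ∃ π₀ : Finset (J × T × K),
      MaxLexminFair b n π₀ ∧ sortedVec π₀ = φf) :
    sInf {z | ∃ π' : Finset ((J ⊕ Dummy φf) × (T ⊕ Fin (Ldim φf)) × K),
        FeasibleAug b n φf π' ∧ π'.card = ZmaxAug b n φf ∧
          cost (costAug c φf) π' = z} =
      sInf {z | ∃ π : Finset (J × T × K),
        Feasible b n π ∧ π.card = Zmax b n ∧ sortedVec π = φf ∧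
          cost c π = z} :=
  augmented_min_cost_eq_general b c n φf hφf
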